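/- arXiv:1607.06705 — 2 statements merged into one kernel-verified Lean document; each statement's English description precedes it below -/
import Mathlib

section
/- Let R be an integral domain, ★ a star operation on R, and let J ⊆ I and J' ⊆ I' be nonzero fractional ideals of R. If J is a ★-reduction of I and J' is a ★-reduction of I', then J·J' is a ★-reduction of I·I'. -/
open scoped nonZeroDivisors

/-- A star operation on a domain `R` with fraction field `K`: a map on (nonzero) fractional
ideals satisfying `(xR)^★ = xR`, `(xI)^★ = x I^★`, `I ⊆ I^★`, monotonicity, and idempotency. -/
structure StarOperation (R K : Type*) [CommRing R] [IsDomain R] [Field K] [Algebra R K]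
    [IsFractionRing R K] where
  star : FractionalIdeal R⁰ K → FractionalIdeal R⁰ K
  star_spanSingleton : ∀ x : K, x ≠ 0 →
    star (FractionalIdeal.spanSingleton R⁰ x) = FractionalIdeal.spanSingleton R⁰ x
  star_spanSingleton_mul : ∀ (x : K) (I : FractionalIdeal R⁰ K), x ≠ 0 → I ≠ 0 →
    star (FractionalIdeal.spanSingleton R⁰ x * I) = FractionalIdeal.spanSingleton R⁰ x * star I
  le_star : ∀ I : FractionalIdeal R⁰ K, I ≠ 0 → I ≤ star I
  star_mono : ∀ I J : FractionalIdeal R⁰ K, I ≠ 0 → I ≤ J → star I ≤ star J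
  star_star : ∀ I : FractionalIdeal R⁰ K, I ≠ 0 → star (star I) = star I

/-- `J` is a `★`-reduction of `I` if `(J · I^n)^★ = (I^(n+1))^★` for some integer `n ≥ 0`. -/
def IsStarReduction {R K : Type*} [CommRing R] [IsDomain R] [Field K] [Algebra R K]
    [IsFractionRing R K] (s : StarOperation R K) (J I : FractionalIdeal R⁰ K) : Prop :=
  ∃ n : ℕ, s.star (J * I ^ n) = s.star (I ^ (n + 1))

/-! Proof idea: `(A^★ B)^★ = (AB)^★` lets one replace a factor `A` of a product inside `★` by any
`A'` with `A^★ = A'^★`. Write `JJ'(II')^(n+m)` as `(JIⁿ)(J'I'^m)(I^m I'ⁿ)` and replace `JIⁿ` by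
`Iⁿ⁺¹` and `J'I'^m` by `I'^(m+1)`; what remains is `(II')^(n+m+1)`. -/

instance FractionalIdeal.instNoZeroDivisors {R P : Type*} [CommRing R] [CommRing P]
    [NoZeroDivisors P] [Algebra R P] {S : Submonoid R} : NoZeroDivisors (FractionalIdeal S P) :=
  Function.Injective.noZeroDivisors _ FractionalIdeal.coeToSubmodule_injective
    FractionalIdeal.coe_zero FractionalIdeal.coe_mul

namespace StarOperation

open FractionalIdeal

variable {R K : Type*} [CommRing R] [IsDomain R] [Field K] [Algebra R K] [IsFractionRing R K]
  (s : StarOperation R K)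

theorem star_ne_zero {A : FractionalIdeal R⁰ K} (hA : A ≠ 0) : s.star A ≠ 0 := fun h =>
  hA (le_antisymm (h ▸ s.le_star A hA) (zero_le _))

theorem mul_star_le_star_mul {A : FractionalIdeal R⁰ K} (hA : A ≠ 0) (B : FractionalIdeal R⁰ K) :
    B * s.star A ≤ s.star (B * A) := by
  refine FractionalIdeal.mul_le.mpr fun b hb a ha => ?_
  rcases eq_or_ne b 0 with rfl | hb0
  · simpa only [zero_mul] using (s.star (B * A)).zero_mem
  have hbA : spanSingleton R⁰ b * A ≠ 0 := mul_ne_zero (spanSingleton_ne_zero_iff.mpr hb0) hA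
  have hle : spanSingleton R⁰ b * s.star A ≤ s.star (B * A) := by
    rw [← s.star_spanSingleton_mul b A hb0 hA]
    exact s.star_mono _ _ hbA (mul_le_mul_left (spanSingleton_le_iff_mem.mpr hb) A)
  exact hle (mul_mem_mul (mem_spanSingleton_self _ b) ha)

theorem star_star_mul {A : FractionalIdeal R⁰ K} (hA : A ≠ 0) (B : FractionalIdeal R⁰ K) :
    s.star (s.star A * B) = s.star (A * B) := by
  rcases eq_or_ne B 0 with rfl | hB
  · simp only [mul_zero]
  have hAB : A * B ≠ 0 := mul_ne_zero hA hB
  apply le_antisymm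
  · calc s.star (s.star A * B) ≤ s.star (s.star (A * B)) := by
          refine s.star_mono _ _ (mul_ne_zero (s.star_ne_zero hA) hB) ?_
          simpa only [mul_comm _ B] using s.mul_star_le_star_mul hA B
      _ = s.star (A * B) := s.star_star _ hAB
  · exact s.star_mono _ _ hAB (mul_le_mul_left (s.le_star A hA) B)

theorem star_mul_eq_of_star_eq {A A' : FractionalIdeal R⁰ K} (hA : A ≠ 0) (hA' : A' ≠ 0)
    (h : s.star A = s.star A') (B : FractionalIdeal R⁰ K) :
    s.star (A * B) = s.star (A' * B) := by
  rw [← s.star_star_mul hA, h, s.star_star_mul hA']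

end StarOperation

theorem starReduction_mul_general (R K : Type*) [CommRing R] [IsDomain R] [Field K] [Algebra R K]
    [IsFractionRing R K] (s : StarOperation R K) (J I J' I' : FractionalIdeal R⁰ K)
    (hJ0 : J ≠ 0) (hI0 : I ≠ 0) (hJ'0 : J' ≠ 0) (hI'0 : I' ≠ 0)
    (h : IsStarReduction s J I) (h' : IsStarReduction s J' I') :
    IsStarReduction s (J * J') (I * I') := by
  obtain ⟨n, hn⟩ := h
  obtain ⟨m, hm⟩ := h'
  refine ⟨n + m, ?_⟩
  have hJIn := mul_ne_zero hJ0 (pow_ne_zero n hI0)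
  have hJ'I'm := mul_ne_zero hJ'0 (pow_ne_zero m hI'0)
  calc s.star (J * J' * (I * I') ^ (n + m))
      = s.star (J * I ^ n * (J' * I' ^ m * (I ^ m * I' ^ n))) := by ring_nf
    _ = s.star (I ^ (n + 1) * (J' * I' ^ m * (I ^ m * I' ^ n))) :=
        s.star_mul_eq_of_star_eq hJIn (pow_ne_zero _ hI0) hn _
    _ = s.star (J' * I' ^ m * (I ^ (n + 1) * (I ^ m * I' ^ n))) := by ring_nf
    _ = s.star (I' ^ (m + 1) * (I ^ (n + 1) * (I ^ m * I' ^ n))) :=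
        s.star_mul_eq_of_star_eq hJ'I'm (pow_ne_zero _ hI'0) hm _
    _ = s.star ((I * I') ^ (n + m + 1)) := by ring_nf

/-- If `J` is a `★`-reduction of `I` and `J'` is a `★`-reduction of `I'`, then `J·J'` is a
`★`-reduction of `I·I'`. -/
theorem starReduction_mul (R K : Type*) [CommRing R] [IsDomain R] [Field K] [Algebra R K]
    [IsFractionRing R K] (s : StarOperation R K) (J I J' I' : FractionalIdeal R⁰ K)
    (hJ0 : J ≠ 0) (hI0 : I ≠ 0) (hJ'0 : J' ≠ 0) (hI'0 : I' ≠ 0)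
    (hJI : J ≤ I) (hJ'I' : J' ≤ I')
    (h : IsStarReduction s J I) (h' : IsStarReduction s J' I') :
    IsStarReduction s (J * J') (I * I') :=
  starReduction_mul_general R K s J I J' I' hJ0 hI0 hJ'0 hI'0 h h'
end

section
/- Let R be an integral domain. If for all nonzero ideals J ⊆ I of R, J is a t-reduction of I if and only if J is a reduction of I, then every nonzero prime ideal P of R satisfies P = P_t. -/
open scoped nonZeroDivisors

/-- The `v`-operation (divisorial closure) on `R`-submodules of the fraction field `K`:
`I_v = (I⁻¹)⁻¹` where `I⁻¹ = (R : I) = 1 / I`. -/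
noncomputable def vS (R K : Type*) [CommRing R] [Field K] [Algebra R K]
    (I : Submodule R K) : Submodule R K := 1 / (1 / I)

/-- The `t`-operation: `I_t = ⋃ J_v` where `J` ranges over nonzero finitely generated
sub-ideals of `I`. -/
noncomputable def tS (R K : Type*) [CommRing R] [Field K] [Algebra R K]
    (I : Submodule R K) : Submodule R K :=
  ⨆ J ∈ {J : Submodule R K | J ≠ ⊥ ∧ J.FG ∧ J ≤ I}, vS R K J

section aux
variable (R K : Type*) [CommRing R] [Field K] [Algebra R K]

lemma le_vS (A : Submodule R K) : A ≤ vS R K A := by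
  intro a ha
  rw [vS, Submodule.mem_div_iff_forall_mul_mem]
  intro y hy
  rw [Submodule.mem_div_iff_forall_mul_mem] at hy
  simpa [mul_comm] using hy a ha

lemma div_antitone {A B : Submodule R K} (hAB : A ≤ B) : 1 / B ≤ 1 / A := by
  intro x hx
  rw [Submodule.mem_div_iff_forall_mul_mem] at hx ⊢
  exact fun y hy => hx y (hAB hy)

lemma vS_mono {A B : Submodule R K} (hAB : A ≤ B) : vS R K A ≤ vS R K B :=
  div_antitone R K (div_antitone R K hAB)

lemma vS_idem (A : Submodule R K) : vS R K (vS R K A) = vS R K A := by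
  apply le_antisymm _ (le_vS R K _)
  show 1 / (1 / (1 / (1 / A))) ≤ 1 / (1 / A)
  apply div_antitone
  exact le_vS R K (1/A)

lemma vS_le_one {A : Submodule R K} (hA : A ≤ 1) : vS R K A ≤ 1 := by
  have h1 : (1 : Submodule R K) ≤ 1 / A := by
    intro x hx
    rw [Submodule.mem_div_iff_forall_mul_mem]
    intro y hy
    simpa using Submodule.mul_mem_mul hx (hA hy)
  refine le_trans (div_antitone R K h1) ?_
  intro x hx
  rw [Submodule.mem_div_iff_forall_mul_mem] at hx
  simpa using hx 1 (Submodule.one_le.mp le_rfl)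

lemma tS_mono {A B : Submodule R K} (hAB : A ≤ B) : tS R K A ≤ tS R K B := by
  refine iSup₂_le fun J hJ => ?_
  exact le_iSup₂_of_le J ⟨hJ.1, hJ.2.1, hJ.2.2.trans hAB⟩ le_rfl

lemma tS_le_one {A : Submodule R K} (hA : A ≤ 1) : tS R K A ≤ 1 :=
  iSup₂_le fun _ hJ => vS_le_one R K (hJ.2.2.trans hA)

lemma le_tS (A : Submodule R K) : A ≤ tS R K A := by
  intro x hx
  by_cases hx0 : x = 0
  · simp [hx0]
  have hmem : (R ∙ x) ∈ {J : Submodule R K | J ≠ ⊥ ∧ J.FG ∧ J ≤ A} :=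
    ⟨by simpa [Submodule.span_singleton_eq_bot] using hx0, Submodule.fg_span_singleton x,
      by simpa [Submodule.span_singleton_le_iff_mem] using hx⟩
  have : (R ∙ x) ≤ tS R K A :=
    le_trans (le_vS R K _) (le_iSup₂_of_le _ hmem le_rfl)
  exact this (Submodule.mem_span_singleton_self x)

lemma fg_finset_sup {ι : Type*} (s : Finset ι) (f : ι → Submodule R K)
    (hf : ∀ i ∈ s, (f i).FG) : (s.sup f).FG := by
  classical
  induction s using Finset.induction with
  | empty => simpa using Submodule.fg_bot
  | insert _ _ hx ih =>
    rw [Finset.sup_insert]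
    exact Submodule.FG.sup (hf _ (Finset.mem_insert_self _ _))
      (ih fun i hi => hf i (Finset.mem_insert_of_mem hi))

lemma exists_of_mem_tS {A : Submodule R K} (hA : A ≠ ⊥) {x : K} (hx : x ∈ tS R K A) :
    ∃ J : Submodule R K, J ≠ ⊥ ∧ J.FG ∧ J ≤ A ∧ x ∈ vS R K J := by
  set S := {J : Submodule R K | J ≠ ⊥ ∧ J.FG ∧ J ≤ A}
  obtain ⟨a, haA, ha0⟩ := Submodule.exists_mem_ne_zero_of_ne_bot hA
  have hSa : (R ∙ a) ∈ S :=
    ⟨by simpa [Submodule.span_singleton_eq_bot] using ha0, Submodule.fg_span_singleton a,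
      by simpa [Submodule.span_singleton_le_iff_mem] using haA⟩
  have htS : tS R K A = sSup (vS R K '' S) := by rw [tS, sSup_image]
  rw [htS] at hx
  have hdir : DirectedOn (· ≤ ·) (vS R K '' S) := by
    rintro _ ⟨J₁, hJ₁, rfl⟩ _ ⟨J₂, hJ₂, rfl⟩
    have hmem : (J₁ ⊔ J₂) ∈ S := by
      refine ⟨fun hb => hJ₁.1 ?_, hJ₁.2.1.sup hJ₂.2.1, sup_le hJ₁.2.2 hJ₂.2.2⟩
      rw [eq_bot_iff]
      exact le_trans le_sup_left hb.le
    exact ⟨vS R K (J₁ ⊔ J₂), Set.mem_image_of_mem _ hmem,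
      vS_mono R K le_sup_left, vS_mono R K le_sup_right⟩
  obtain ⟨_, ⟨J, hJ, rfl⟩, hxJ⟩ :=
    (Submodule.mem_sSup_of_directed ⟨_, Set.mem_image_of_mem _ hSa⟩ hdir).mp hx
  exact ⟨J, hJ.1, hJ.2.1, hJ.2.2, hxJ⟩

lemma tS_tS_le {A : Submodule R K} (hA : A ≠ ⊥) : tS R K (tS R K A) ≤ tS R K A := by
  classical
  refine iSup₂_le fun J hJ => ?_
  obtain ⟨hJ0, hJfg, hJle⟩ := hJ
  obtain ⟨s, hs⟩ := hJfg
  obtain ⟨a, haA, ha0⟩ := Submodule.exists_mem_ne_zero_of_ne_bot hA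
  have hchoice : ∀ y ∈ s, ∃ J' : Submodule R K, J' ≠ ⊥ ∧ J'.FG ∧ J' ≤ A ∧ y ∈ vS R K J' := by
    intro y hy
    exact exists_of_mem_tS R K hA (hJle (hs ▸ Submodule.subset_span hy))
  choose! g hg using hchoice
  set J' : Submodule R K := (R ∙ a) ⊔ s.sup g with hJ'def
  have hJ'S : J' ≠ ⊥ ∧ J'.FG ∧ J' ≤ A := by
    refine ⟨?_, ?_, ?_⟩
    · intro hb
      apply ha0
      have : (R ∙ a) ≤ ⊥ := hb ▸ le_sup_left
      simpa using this (Submodule.mem_span_singleton_self a)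
    · exact Submodule.FG.sup (Submodule.fg_span_singleton a)
        (fg_finset_sup R K s g fun i hi => (hg i hi).2.1)
    · refine sup_le (by simpa [Submodule.span_singleton_le_iff_mem] using haA)
        (Finset.sup_le fun i hi => (hg i hi).2.2.1)
  have hJle' : J ≤ vS R K J' := by
    rw [← hs, Submodule.span_le]
    intro y hy
    exact vS_mono R K (le_trans (Finset.le_sup hy) le_sup_right) (hg y hy).2.2.2
  calc vS R K J ≤ vS R K (vS R K J') := vS_mono R K hJle'
    _ = vS R K J' := vS_idem R K J'
    _ ≤ tS R K A := le_iSup₂_of_le J' hJ'S le_rfl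

end aux

/-- The image of an ideal of `R` in the fraction field `K`, as an `R`-submodule. -/
noncomputable def idealToSub (R K : Type*) [CommRing R] [Field K] [Algebra R K]
    (I : Ideal R) : Submodule R K := Submodule.map (Algebra.linearMap R K) I

/-- The `t`-closure of an ideal of `R`, computed in the fraction field `K`. -/
noncomputable def tI (R K : Type*) [CommRing R] [Field K] [Algebra R K]
    (I : Ideal R) : Submodule R K := tS R K (idealToSub R K I)

/-- The `v`-closure of an ideal of `R`, computed in the fraction field `K`. -/
noncomputable def vI (R K : Type*) [CommRing R] [Field K] [Algebra R K]
    (I : Ideal R) : Submodule R K := vS R K (idealToSub R K I)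

/-- If reduction and `t`-reduction coincide for all nonzero ideals of the domain `R`, then
every nonzero prime ideal `P` of `R` is a `t`-ideal, i.e. `P = P_t`. -/
theorem prime_is_t_ideal_of_reduction_eq_tReduction (R K : Type*) [CommRing R] [IsDomain R]
    [Field K] [Algebra R K] [IsFractionRing R K]
    (h : ∀ J I : Ideal R, J ≠ 0 → I ≠ 0 → J ≤ I →
      ((∃ n : ℕ, tI R K (J * I ^ n) = tI R K (I ^ (n + 1))) ↔
        (∃ n : ℕ, J * I ^ n = I ^ (n + 1))))
    (P : Ideal R) (hP : P.IsPrime) (hP0 : P ≠ 0) :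
    tI R K P = idealToSub R K P := by
  have hinj : Function.Injective (algebraMap R K) := IsFractionRing.injective R K
  have hPone : idealToSub R K P ≤ 1 := by
    rintro _ ⟨x, _, rfl⟩
    exact Submodule.algebraMap_mem x
  have hPb : idealToSub R K P ≠ ⊥ := by
    obtain ⟨p, hpP, hp0⟩ := Submodule.exists_mem_ne_zero_of_ne_bot hP0
    intro hb
    have : algebraMap R K p ∈ idealToSub R K P := ⟨p, hpP, rfl⟩
    rw [hb, Submodule.mem_bot] at this
    exact hp0 (hinj (by simpa using this))
  set Q : Ideal R := Submodule.comap (Algebra.linearMap R K) (tI R K P) with hQdef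
  have hQsub : idealToSub R K Q = tI R K P := by
    rw [idealToSub, hQdef, Submodule.map_comap_eq, ← Submodule.one_eq_range]
    exact inf_eq_right.mpr (tS_le_one R K hPone)
  have hPQ : P ≤ Q := by
    intro x hx
    exact le_tS R K (idealToSub R K P) ⟨x, hx, rfl⟩
  have hQ0 : Q ≠ 0 := fun hb => hP0 (le_antisymm (hb ▸ hPQ) zero_le)
  have htQ : tI R K Q = tI R K P := by
    rw [tI, hQsub, tI]
    exact le_antisymm (tS_tS_le R K hPb) (tS_mono R K (le_tS R K _))
  obtain ⟨n, hn⟩ := (h P Q hP0 hQ0 hPQ).mp ⟨0, by simpa using htQ.symm⟩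
  have hQP : Q ≤ P := by
    have hpow : Q ^ (n + 1) ≤ P := hn ▸ Ideal.mul_le_left
    exact (Ideal.IsPrime.pow_le_iff (Nat.succ_ne_zero n)).mp hpow
  rw [← hQsub, le_antisymm hQP hPQ]
end
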